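/- arXiv:0804.4020 — 2 statements merged into one kernel-verified Lean document; each statement's English description precedes it below -/
import Mathlib

section
/- The greatest convex function on [0,∞) not exceeding p_N(u) = 2/(1+u²) is p̄_N(u) = 2 - u for 0 ≤ u ≤ 1 and p̄_N(u) = 2/(1+u²) for u ≥ 1. That is, this piecewise function is convex, lies below p_N everywhere, and any convex function below p_N lies below it. -/
noncomputable def pN (u : ℝ) : ℝ := 2 / (1 + u ^ 2)

noncomputable def pbarN (u : ℝ) : ℝ := if u ≤ 1 then 2 - u else 2 / (1 + u ^ 2)

lemma denom_pos (u : ℝ) : (0:ℝ) < 1 + u ^ 2 := by positivity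

lemma g_hasDerivAt (x : ℝ) :
    HasDerivAt (fun u : ℝ => 2 / (1 + u ^ 2)) (-4 * x / (1 + x ^ 2) ^ 2) x := by
  have h1 : HasDerivAt (fun u : ℝ => 1 + u ^ 2) (2 * x) x := by
    simpa using ((hasDerivAt_pow 2 x).const_add (1:ℝ))
  have h2 : HasDerivAt (fun u : ℝ => 2 / (1 + u ^ 2)) (2 * (-(2 * x) / (1 + x ^ 2) ^ 2)) x := by
    simpa [div_eq_mul_inv] using (h1.inv (denom_pos x).ne').const_mul (2:ℝ)
  convert h2 using 1
  ring

noncomputable def dbar (u : ℝ) : ℝ := if u ≤ 1 then -1 else -4 * u / (1 + u ^ 2) ^ 2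

lemma pbar_hasDerivAt (x : ℝ) : HasDerivAt pbarN (dbar x) x := by
  rcases lt_trichotomy x 1 with hx | hx | hx
  · have h : HasDerivAt (fun u : ℝ => 2 - u) (-1) x := by
      simpa using (hasDerivAt_id x).const_sub (2:ℝ)
    have he : pbarN =ᶠ[nhds x] (fun u : ℝ => 2 - u) := by
      filter_upwards [Iio_mem_nhds hx] with u hu
      simp [pbarN, (Set.mem_Iio.mp hu).le]
    rw [dbar, if_pos hx.le]
    exact h.congr_of_eventuallyEq he
  · subst hx
    have hle : HasDerivWithinAt pbarN (-1) (Set.Iic 1) 1 := by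
      have h : HasDerivAt (fun u : ℝ => 2 - u) (-1) 1 := by
        simpa using (hasDerivAt_id (1:ℝ)).const_sub (2:ℝ)
      exact (h.hasDerivWithinAt).congr (fun u hu => by simp [pbarN, (Set.mem_Iic.mp hu)])
        (by norm_num [pbarN])
    have hge : HasDerivWithinAt pbarN (-1) (Set.Ici 1) 1 := by
      have h := (g_hasDerivAt 1).hasDerivWithinAt (s := Set.Ici 1)
      have h' : HasDerivWithinAt pbarN (-4 * 1 / (1 + (1:ℝ) ^ 2) ^ 2) (Set.Ici 1) 1 := by
        refine h.congr (fun u hu => ?_) (by norm_num [pbarN])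
        rcases eq_or_lt_of_le (Set.mem_Ici.mp hu) with h1 | h1
        · subst h1; norm_num [pbarN]
        · simp [pbarN, not_le.mpr h1]
      convert h' using 1; norm_num
    have := hle.union hge
    rw [Set.Iic_union_Ici, hasDerivWithinAt_univ] at this
    simpa [dbar] using this
  · have he : pbarN =ᶠ[nhds x] (fun u : ℝ => 2 / (1 + u ^ 2)) := by
      filter_upwards [Ioi_mem_nhds hx] with u hu
      simp [pbarN, not_le.mpr (Set.mem_Ioi.mp hu)]
    rw [dbar, if_neg (not_le.mpr hx)]
    exact (g_hasDerivAt x).congr_of_eventuallyEq he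

lemma dbar_mono : MonotoneOn dbar (Set.Ioi (0:ℝ)) := by
  rintro a (ha : 0 < a) b (hb : 0 < b) hab
  unfold dbar
  rcases le_or_gt b 1 with hb1 | hb1
  · rw [if_pos (hab.trans hb1), if_pos hb1]
  · rw [if_neg (not_le.mpr hb1)]
    rcases le_or_gt a 1 with ha1 | ha1
    · rw [if_pos ha1, le_div_iff₀ (by positivity)]
      nlinarith [sq_nonneg (b^2 - 1), sq_nonneg (b - 1)]
    · rw [if_neg (not_le.mpr ha1)]
      rw [div_le_div_iff₀ (by positivity) (by positivity)]
      have key : (0:ℝ) ≤ (b - a) * (2*a*b - 1 + a*b*(a^2 + a*b + b^2)) :=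
        mul_nonneg (by linarith) (by nlinarith [mul_lt_mul'' ha1 hb1 zero_le_one zero_le_one, mul_nonneg (mul_pos ha hb).le (by positivity : (0:ℝ) ≤ a^2 + a*b + b^2)])
      nlinarith [key]

lemma pbarN_le_pN (u : ℝ) (hu : 0 ≤ u) : pbarN u ≤ pN u := by
  unfold pbarN pN
  split_ifs with h
  · rw [le_div_iff₀ (denom_pos u)]
    nlinarith [mul_nonneg hu (sq_nonneg (u - 1))]
  · exact le_rfl

theorem pbarN_is_greatest_convex_minorant :
    ConvexOn ℝ (Set.Ici (0 : ℝ)) pbarN ∧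
    (∀ u : ℝ, 0 ≤ u → pbarN u ≤ pN u) ∧
    ∀ q : ℝ → ℝ, ConvexOn ℝ (Set.Ici (0 : ℝ)) q →
      (∀ u : ℝ, 0 ≤ u → q u ≤ pN u) →
      ∀ u : ℝ, 0 ≤ u → q u ≤ pbarN u := by
  refine ⟨?_, pbarN_le_pN, ?_⟩
  · apply MonotoneOn.convexOn_of_deriv (convex_Ici 0)
    · exact fun x _ => (pbar_hasDerivAt x).continuousAt.continuousWithinAt
    · intro x _
      exact (pbar_hasDerivAt x).differentiableAt.differentiableWithinAt
    · rw [interior_Ici]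
      intro a ha b hb hab
      rw [(pbar_hasDerivAt a).deriv, (pbar_hasDerivAt b).deriv]
      exact dbar_mono ha hb hab
  · intro q hq hqle u hu
    rcases le_or_gt u 1 with h1 | h1
    · have key := hq.2 (Set.mem_Ici.mpr le_rfl) (Set.mem_Ici.mpr (zero_le_one))
        (sub_nonneg.2 h1) hu (by ring)
      have h0 : q ((1 - u) • (0:ℝ) + u • 1) = q u := by norm_num
      rw [h0] at key
      have q0 : q 0 ≤ 2 := by have := hqle 0 le_rfl; simpa [pN] using this
      have q1 : q 1 ≤ 1 := by have := hqle 1 zero_le_one; norm_num [pN] at this; linarith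
      rw [pbarN, if_pos h1]
      calc q u ≤ (1-u) * q 0 + u * q 1 := key
        _ ≤ (1-u) * 2 + u * 1 := by
            have h1' := sub_nonneg.2 h1
            nlinarith [mul_le_mul_of_nonneg_left q0 h1', mul_le_mul_of_nonneg_left q1 hu]
        _ = 2 - u := by ring
    · rw [pbarN, if_neg (not_le.mpr h1)]
      exact hqle u hu
end

section
/- Let p : [0,∞) → (0,∞) be continuous with p(u) → 0 as u → ∞, let p̄ be its convexification (greatest convex minorant), and let f be a convex nondecreasing function on [0,1]. If for a.e. x the value f'(x) minimizes u ↦ x·p(u) + λ·u for some λ > 0, then p(f'(x)) = p̄(f'(x)) for a.e. x, so ∫₀¹ p(f'(x))·x dx = ∫₀¹ p̄(f'(x))·x dx. -/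
open MeasureTheory

/-- If `f'(x)` minimizes `u ↦ x p(u) + λ u` a.e., then `p` agrees with its
greatest convex minorant `p̄` at `f'(x)` a.e., so the two resistance integrals
coincide. -/
theorem p_eq_convexification_along_minimizer
    (p pbar : ℝ → ℝ)
    (hp_pos : ∀ u : ℝ, 0 ≤ u → 0 < p u)
    (hp_cont : ContinuousOn p (Set.Ici 0))
    (hp_lim : Filter.Tendsto p Filter.atTop (nhds 0))
    (hpbar_conv : ConvexOn ℝ (Set.Ici (0 : ℝ)) pbar)
    (hpbar_le : ∀ u : ℝ, 0 ≤ u → pbar u ≤ p u)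
    (hpbar_greatest : ∀ q : ℝ → ℝ, ConvexOn ℝ (Set.Ici (0 : ℝ)) q →
      (∀ u : ℝ, 0 ≤ u → q u ≤ p u) → ∀ u : ℝ, 0 ≤ u → q u ≤ pbar u)
    (f : ℝ → ℝ)
    (hf_conv : ConvexOn ℝ (Set.Icc (0 : ℝ) 1) f)
    (hf_mono : MonotoneOn f (Set.Icc (0 : ℝ) 1))
    (lam : ℝ) (hlam : 0 < lam)
    (hmin : ∀ᵐ x ∂(volume.restrict (Set.Icc (0 : ℝ) 1)),
      0 ≤ deriv f x ∧
        ∀ u : ℝ, 0 ≤ u →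
          x * p (deriv f x) + lam * deriv f x ≤ x * p u + lam * u) :
    (∀ᵐ x ∂(volume.restrict (Set.Icc (0 : ℝ) 1)),
        p (deriv f x) = pbar (deriv f x)) ∧
      (∫ x in (0 : ℝ)..1, p (deriv f x) * x) =
        ∫ x in (0 : ℝ)..1, pbar (deriv f x) * x := by
  have hmem : ∀ᵐ x ∂(volume.restrict (Set.Icc (0 : ℝ) 1)), x ∈ Set.Icc (0:ℝ) 1 :=
    ae_restrict_mem measurableSet_Icc
  have hne : ∀ᵐ x ∂(volume.restrict (Set.Icc (0 : ℝ) 1)), x ≠ 0 := by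
    refine (ae_restrict_of_ae ?_)
    have : (volume : Measure ℝ) {(0:ℝ)} = 0 := measure_singleton 0
    exact (measure_eq_zero_iff_ae_notMem.mp this).mono (fun x hx => by simpa using hx)
  have h1 : ∀ᵐ x ∂(volume.restrict (Set.Icc (0 : ℝ) 1)),
      p (deriv f x) = pbar (deriv f x) := by
    filter_upwards [hmin, hmem, hne] with x hx hxm hx0
    have hxpos : 0 < x := lt_of_le_of_ne hxm.1 (Ne.symm hx0)
    set d := deriv f x with hd
    set q : ℝ → ℝ := fun u => p d - (lam / x) * (u - d) with hq
    have hqconv : ConvexOn ℝ (Set.Ici (0:ℝ)) q := by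
      refine ⟨convex_Ici 0, ?_⟩
      intro a _ b _ s t hs ht hst
      simp only [hq, smul_eq_mul]
      rw [show t = 1 - s from by linarith]
      apply le_of_eq; ring
    have hcanc : lam / x * x = lam := div_mul_cancel₀ _ hxpos.ne'
    have hqle : ∀ u : ℝ, 0 ≤ u → q u ≤ p u := by
      intro u hu
      have h := hx.2 u hu
      simp only [hq]
      nlinarith [h, hxpos]
    have h2 := hpbar_greatest q hqconv hqle d hx.1
    have h3 : q d = p d := by simp [hq]
    have h4 : p d ≤ pbar d := h3 ▸ h2
    exact le_antisymm h4 (hpbar_le d hx.1)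
  refine ⟨h1, ?_⟩
  have h2 : ∀ᵐ x ∂(volume.restrict (Set.Ioc (0 : ℝ) 1)),
      p (deriv f x) * x = pbar (deriv f x) * x := by
    have := ae_restrict_of_ae_restrict_of_subset Set.Ioc_subset_Icc_self h1
    exact this.mono (fun x hx => by rw [hx])
  rw [intervalIntegral.integral_of_le (by norm_num : (0:ℝ) ≤ 1),
    intervalIntegral.integral_of_le (by norm_num : (0:ℝ) ≤ 1)]
  exact integral_congr_ae h2
end
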